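/- With vertex labels defined from T_s, a non-tree edge (x, y) belongs to C'(v_i) (i.e., x ∈ T_1(v_i) and y ∈ T_2(v_i)) if and only if label(x) < i and label(y) > i. Consequently the sets C''(v_i) for distinct internal vertices v_i are pairwise disjoint. -/

import Mathlib

open Classical SimpleGraph

noncomputable section

variable {V : Type*}

/-- Total weight of a walk, summing `w` over its darts. -/
def walkWeight (G : SimpleGraph V) (w : V → V → ℝ) {u v : V} (p : G.Walk u v) : ℝ :=
  (p.darts.map fun d => w d.fst d.snd).sum

/-- Weighted shortest-path distance: infimum of walk weights. -/
def wdist (G : SimpleGraph V) (w : V → V → ℝ) (u v : V) : ℝ :=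
  sInf {r | ∃ p : G.Walk u v, walkWeight G w p = r}

/-- The graph obtained by deleting a set of vertices (kept on the same vertex type). -/
def delVerts (G : SimpleGraph V) (S : Set V) : SimpleGraph V where
  Adj a b := G.Adj a b ∧ a ∉ S ∧ b ∉ S
  symm := ⟨fun a b h => ⟨h.1.symm, h.2.2, h.2.1⟩⟩
  loopless := ⟨fun a h => G.irrefl h.1⟩

/-- `u` is in the subtree of `T` rooted at the `k`-th vertex of the path `vp`. -/
def inSub (T : SimpleGraph V) (vp : ℕ → V) (k : ℕ) (u : V) : Prop :=
  k = 0 ∨ (T.deleteEdges {s(vp (k-1), vp k)}).Reachable (vp k) u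

/-- The label of a vertex: the largest `k ≤ l` with `u` in the subtree rooted at `vp k`. -/
def label (T : SimpleGraph V) (vp : ℕ → V) (l : ℕ) (u : V) : ℕ :=
  sSup {k | k ≤ l ∧ inSub T vp k u}

/-! Deleting the internal path vertex `v_i` from the tree `T` cuts the path edges on both sides
of it, both bridges. The component of `v_{i+1}` is therefore the subtree `inSub (i + 1)` (the
paper's `T_{v_{i+1}}`), and, since the path prefix up to `v_{i-1}` avoids the edge `v_{i-1} v_i`,
the component of `s` is the complement of the subtree `inSub i`. The subtrees `inSub k` are nested,
so `inSub k u ↔ k ≤ label u`: the two components are `{label > i}` and `{label < i}`, and `F(v_i)`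
is `{label = i}`. An edge of `C''(v_i)` has one endpoint of label `i` and the other of larger label,
so its endpoint of smaller label determines `i`. -/

lemma Nat.le_sSup_iff_of_pred {P : ℕ → Prop} {l m : ℕ} (h0 : P 0)
    (hpred : ∀ k < l, P (k + 1) → P k) (hm : m ≤ l) :
    m ≤ sSup {k | k ≤ l ∧ P k} ↔ P m := by
  have hbdd : BddAbove {k | k ≤ l ∧ P k} := ⟨l, fun _ hk => hk.1⟩
  refine ⟨fun h => ?_, fun h => le_csSup hbdd ⟨hm, h⟩⟩
  have hne : {k | k ≤ l ∧ P k}.Nonempty := ⟨0, Nat.zero_le l, h0⟩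
  obtain ⟨hnl, hn⟩ := Nat.sSup_mem hne hbdd
  exact Nat.decreasingInduction' (fun k hk _ => hpred k (by omega)) h hn

lemma eq_of_mk_eq_of_lt {α : Type*} [Preorder α] {f : V → α} {a₁ b₁ a₂ b₂ : V}
    (he : s(a₁, b₁) = s(a₂, b₂)) (h₁ : f a₁ < f b₁) (h₂ : f a₂ < f b₂) : a₁ = a₂ := by
  rcases Sym2.eq_iff.mp he with ⟨ha, -⟩ | ⟨ha, hb⟩
  · exact ha
  · subst ha hb
    exact absurd (h₁.trans h₂) (lt_irrefl _)

namespace SimpleGraph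

lemma delVerts_adj {G : SimpleGraph V} {S : Set V} {a b : V} :
    (delVerts G S).Adj a b ↔ G.Adj a b ∧ a ∉ S ∧ b ∉ S := Iff.rfl

lemma delVerts_le_deleteEdges {T : SimpleGraph V} {v : V} {e : Sym2 V} (hv : v ∈ e) :
    delVerts T {v} ≤ T.deleteEdges {e} := by
  intro a b hab
  obtain ⟨hab, ha, hb⟩ := delVerts_adj.mp hab
  refine (deleteEdges_adj ..).mpr ⟨hab, fun he => ?_⟩
  rw [← Set.mem_singleton_iff.mp he, Sym2.mem_iff] at hv
  rcases hv with rfl | rfl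
  exacts [ha rfl, hb rfl]

lemma Walk.reachable_delVerts {G T : SimpleGraph V} (hGT : G ≤ T) {v a u : V} (W : G.Walk a u)
    (hv : v ∉ W.support) : (delVerts T {v}).Reachable a u := by
  induction W with
  | nil => exact Reachable.refl _
  | cons h q ih =>
    rw [Walk.support_cons, List.mem_cons, not_or] at hv
    refine Adj.reachable (delVerts_adj.mpr ⟨hGT h, ?_, ?_⟩) |>.trans (ih hv.2)
    exacts [fun h' => hv.1 (Set.mem_singleton_iff.mp h').symm,
      fun h' => hv.2 (Set.mem_singleton_iff.mp h' ▸ q.start_mem_support)]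

/-- A walk avoiding the bridge `s(c, v)` cannot pass through `v`, or its prefix up to `v` would
reconnect `c` and `v`. -/
lemma IsAcyclic.reachable_delVerts_of_reachable_deleteEdges {T : SimpleGraph V}
    (hT : T.IsAcyclic) {c v u : V} (hcv : T.Adj c v)
    (h : (T.deleteEdges {s(c, v)}).Reachable c u) : (delVerts T {v}).Reachable c u := by
  obtain ⟨W⟩ := h
  by_cases hv : v ∈ W.support
  · exact absurd ⟨W.takeUntil v hv⟩ (isAcyclic_iff_forall_adj_isBridge.mp hT hcv)
  · exact W.reachable_delVerts (deleteEdges_le _) hv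

lemma Reachable.deleteEdges_or {G : SimpleGraph V} {u c d : V} (h : G.Reachable u c) :
    (G.deleteEdges {s(c, d)}).Reachable u c ∨ (G.deleteEdges {s(c, d)}).Reachable u d := by
  obtain ⟨W⟩ := h
  induction W with
  | nil => exact Or.inl (Reachable.refl _)
  | @cons u b c hub q ih =>
    by_cases he : s(u, b) = s(c, d)
    · rcases Sym2.eq_iff.mp he with ⟨rfl, -⟩ | ⟨rfl, -⟩
      exacts [Or.inl (Reachable.refl _), Or.inr (Reachable.refl _)]
    · have hub' : (G.deleteEdges {s(c, d)}).Adj u b :=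
        (deleteEdges_adj ..).mpr ⟨hub, Set.notMem_singleton_iff.mpr he⟩
      exact ih.imp hub'.reachable.trans hub'.reachable.trans

end SimpleGraph

structure IsPathSeq (T : SimpleGraph V) (vp : ℕ → V) (l : ℕ) : Prop where
  adj : ∀ j < l, T.Adj (vp j) (vp (j + 1))
  injOn : Set.InjOn vp {j | j ≤ l}

lemma SimpleGraph.Walk.IsPath.isPathSeq {G T : SimpleGraph V} {s t : V} {p : G.Walk s t}
    (hp : p.IsPath) (hpT : ∀ e ∈ p.edges, e ∈ T.edgeSet) : IsPathSeq T p.getVert p.length where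
  adj j hj := hpT _ ((Walk.mk_mem_edges_iff_exists p).mpr ⟨j, hj, rfl⟩)
  injOn := hp.getVert_injOn

lemma inSub_succ_iff {T : SimpleGraph V} {vp : ℕ → V} {k : ℕ} {u : V} :
    inSub T vp (k + 1) u ↔ (T.deleteEdges {s(vp k, vp (k + 1))}).Reachable (vp (k + 1)) u := by
  simp [inSub]

namespace IsPathSeq

variable {T : SimpleGraph V} {vp : ℕ → V} {l : ℕ}

lemma adj_deleteEdges_of_ne (hP : IsPathSeq T vp l) {j k : ℕ} (hj : j < l) (hk : k < l)
    (hjk : j ≠ k) : (T.deleteEdges {s(vp k, vp (k + 1))}).Adj (vp j) (vp (j + 1)) := by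
  refine (deleteEdges_adj ..).mpr ⟨hP.adj j hj, fun he => hjk ?_⟩
  have inj {a b} (ha : a ≤ l) (hb : b ≤ l) (hab : vp a = vp b) := hP.injOn ha hb hab
  rcases Sym2.eq_iff.mp (Set.mem_singleton_iff.mp he) with ⟨h, -⟩ | ⟨h₁, h₂⟩
  · exact inj hj.le hk.le h
  · have := inj hj.le hk h₁
    have := inj hj hk.le h₂
    omega

lemma reachable_deleteEdges_of_le (hP : IsPathSeq T vp l) {j m : ℕ} (hjm : j ≤ m) (hm : m < l) :
    (T.deleteEdges {s(vp m, vp (m + 1))}).Reachable (vp 0) (vp j) := by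
  induction j with
  | zero => exact Reachable.refl _
  | succ n ih =>
    exact (ih (by omega)).trans (hP.adj_deleteEdges_of_ne (by omega) hm (by omega)).reachable

lemma reachable_delVerts_succ_iff (hP : IsPathSeq T vp l) (hT : T.IsAcyclic) {i : ℕ} (hi : i < l)
    (u : V) : (delVerts T {vp i}).Reachable (vp (i + 1)) u ↔ inSub T vp (i + 1) u := by
  rw [inSub_succ_iff]
  refine ⟨fun h => h.mono (delVerts_le_deleteEdges (Sym2.mem_mk_left _ _)), fun h => ?_⟩
  rw [Sym2.eq_swap] at h
  exact hT.reachable_delVerts_of_reachable_deleteEdges (hP.adj i hi).symm h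

lemma reachable_delVerts_zero_iff (hP : IsPathSeq T vp l) (hT : T.IsTree) {i : ℕ} (hi : 0 < i)
    (hil : i ≤ l) (u : V) : (delVerts T {vp i}).Reachable (vp 0) u ↔ ¬ inSub T vp i u := by
  obtain ⟨m, rfl⟩ : ∃ m, i = m + 1 := ⟨i - 1, by omega⟩
  have hm : m < l := by omega
  rw [inSub_succ_iff]
  set R := T.deleteEdges {s(vp m, vp (m + 1))}
  have hbridge : ¬ R.Reachable (vp m) (vp (m + 1)) :=
    isAcyclic_iff_forall_adj_isBridge.mp hT.isAcyclic (hP.adj m hm)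
  have hprefix : R.Reachable (vp 0) (vp m) := hP.reachable_deleteEdges_of_le le_rfl hm
  constructor
  · intro h h'
    have h₀ : R.Reachable (vp 0) u := h.mono (delVerts_le_deleteEdges (Sym2.mem_mk_right _ _))
    exact hbridge (hprefix.symm.trans (h₀.trans h'.symm))
  · intro h
    have hmu : R.Reachable (vp m) u :=
      ((hT.connected.preconnected u (vp m)).deleteEdges_or.resolve_right (h ·.symm)).symm
    have lift {w} := hT.isAcyclic.reachable_delVerts_of_reachable_deleteEdges (u := w) (hP.adj m hm)
    exact (lift hprefix.symm).symm.trans (lift hmu)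

lemma inSub_of_inSub_succ (hP : IsPathSeq T vp l) (hT : T.IsAcyclic) {k : ℕ} (hk : k < l)
    {u : V} (h : inSub T vp (k + 1) u) : inSub T vp k u := by
  rcases k with _ | k
  · exact Or.inl rfl
  rw [inSub_succ_iff]
  have h' := (hP.reachable_delVerts_succ_iff hT hk u).mpr h
  exact (hP.adj_deleteEdges_of_ne hk (by omega) (by omega)).reachable.trans
    (h'.mono (delVerts_le_deleteEdges (Sym2.mem_mk_right _ _)))

lemma le_label_iff (hP : IsPathSeq T vp l) (hT : T.IsAcyclic) {m : ℕ} (hm : m ≤ l) (u : V) :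
    m ≤ label T vp l u ↔ inSub T vp m u :=
  Nat.le_sSup_iff_of_pred (Or.inl rfl) (fun _ hk => hP.inSub_of_inSub_succ hT hk) hm

lemma reachable_delVerts_succ_iff_lt_label (hP : IsPathSeq T vp l) (hT : T.IsAcyclic) {i : ℕ}
    (hi : i < l) (u : V) : (delVerts T {vp i}).Reachable (vp (i + 1)) u ↔ i < label T vp l u := by
  rw [hP.reachable_delVerts_succ_iff hT hi, ← hP.le_label_iff hT hi, Nat.succ_le_iff]

lemma reachable_delVerts_zero_iff_label_lt (hP : IsPathSeq T vp l) (hT : T.IsTree) {i : ℕ}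
    (hi : 0 < i) (hil : i ≤ l) (u : V) :
    (delVerts T {vp i}).Reachable (vp 0) u ↔ label T vp l u < i := by
  rw [hP.reachable_delVerts_zero_iff hT hi hil, ← hP.le_label_iff hT.isAcyclic hil, not_le]

end IsPathSeq

theorem stmt18_general {V : Type*}
    (G : SimpleGraph V)
    (s t : V) (p : G.Walk s t) (hp : p.IsPath)
    (T : SimpleGraph V) (hT : T.IsTree)
    (hPT : ∀ e ∈ p.edges, e ∈ T.edgeSet)
    (i : ℕ) (hi1 : 1 ≤ i) (hil : i + 1 ≤ p.length)
    (x y : V) :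
    (((delVerts T {p.getVert i}).Reachable s x ∧
      (delVerts T {p.getVert i}).Reachable (p.getVert (i+1)) y) ↔
     (label T p.getVert p.length x < i ∧ i < label T p.getVert p.length y)) ∧
    (∀ i₁ i₂ : ℕ, 1 ≤ i₁ → i₁ + 1 ≤ p.length → 1 ≤ i₂ → i₂ + 1 ≤ p.length → i₁ ≠ i₂ →
      ∀ e : Sym2 V,
        ¬ ((e ≠ s(p.getVert i₁, p.getVert (i₁+1)) ∧ ∃ a b, e = s(a, b) ∧ G.Adj a b ∧
            (a ≠ p.getVert i₁ ∧ ¬ (delVerts T {p.getVert i₁}).Reachable s a ∧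
              ¬ (delVerts T {p.getVert i₁}).Reachable (p.getVert (i₁+1)) a) ∧
            (delVerts T {p.getVert i₁}).Reachable (p.getVert (i₁+1)) b) ∧
          (e ≠ s(p.getVert i₂, p.getVert (i₂+1)) ∧ ∃ a b, e = s(a, b) ∧ G.Adj a b ∧
            (a ≠ p.getVert i₂ ∧ ¬ (delVerts T {p.getVert i₂}).Reachable s a ∧
              ¬ (delVerts T {p.getVert i₂}).Reachable (p.getVert (i₂+1)) a) ∧
            (delVerts T {p.getVert i₂}).Reachable (p.getVert (i₂+1)) b))) := by
  have hP := hp.isPathSeq hPT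
  have hT₁ : ∀ j, 0 < j → j < p.length → ∀ u,
      (delVerts T {p.getVert j}).Reachable s u ↔ label T p.getVert p.length u < j := by
    intro j hj hjl u
    simpa using hP.reachable_delVerts_zero_iff_label_lt hT hj hjl.le u
  have hT₂ : ∀ j < p.length, ∀ u, (delVerts T {p.getVert j}).Reachable (p.getVert (j + 1)) u ↔
      j < label T p.getVert p.length u :=
    fun j hj => hP.reachable_delVerts_succ_iff_lt_label hT.isAcyclic hj
  refine ⟨and_congr (hT₁ i hi1 hil x) (hT₂ i hil y), ?_⟩
  rintro i₁ i₂ h₁ hl₁ h₂ hl₂ hne e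
    ⟨⟨-, a₁, b₁, rfl, -, ⟨-, ha₁, ha₁'⟩, hb₁⟩, ⟨-, a₂, b₂, he, -, ⟨-, ha₂, ha₂'⟩, hb₂⟩⟩
  rw [hT₁ i₁ h₁ hl₁] at ha₁
  rw [hT₁ i₂ h₂ hl₂] at ha₂
  rw [hT₂ i₁ hl₁] at ha₁' hb₁
  rw [hT₂ i₂ hl₂] at ha₂' hb₂
  obtain rfl : a₁ = a₂ := eq_of_mk_eq_of_lt he (by omega : label T p.getVert p.length a₁ < _)
    (by omega : label T p.getVert p.length a₂ < _)
  omega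

theorem stmt18 {V : Type*}
    (G : SimpleGraph V) (hconn : G.Connected) (w : V → V → ℝ)
    (hw : ∀ a b, G.Adj a b → 0 < w a b) (hws : ∀ a b, w a b = w b a)
    (s t : V) (p : G.Walk s t) (hp : p.IsPath)
    (hps : walkWeight G w p = wdist G w s t)
    (T : SimpleGraph V) (hTG : T ≤ G) (hT : T.IsTree)
    (hSPT : ∀ v, wdist T w s v = wdist G w s v)
    (hPT : ∀ e ∈ p.edges, e ∈ T.edgeSet)
    (i : ℕ) (hi1 : 1 ≤ i) (hil : i + 1 ≤ p.length)
    (x y : V) (hxy : G.Adj x y) (hnt : s(x, y) ∉ T.edgeSet) :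
    (((delVerts T {p.getVert i}).Reachable s x ∧
      (delVerts T {p.getVert i}).Reachable (p.getVert (i+1)) y) ↔
     (label T p.getVert p.length x < i ∧ i < label T p.getVert p.length y)) ∧
    (∀ i₁ i₂ : ℕ, 1 ≤ i₁ → i₁ + 1 ≤ p.length → 1 ≤ i₂ → i₂ + 1 ≤ p.length → i₁ ≠ i₂ →
      ∀ e : Sym2 V,
        ¬ ((e ≠ s(p.getVert i₁, p.getVert (i₁+1)) ∧ ∃ a b, e = s(a, b) ∧ G.Adj a b ∧
            (a ≠ p.getVert i₁ ∧ ¬ (delVerts T {p.getVert i₁}).Reachable s a ∧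
              ¬ (delVerts T {p.getVert i₁}).Reachable (p.getVert (i₁+1)) a) ∧
            (delVerts T {p.getVert i₁}).Reachable (p.getVert (i₁+1)) b) ∧
          (e ≠ s(p.getVert i₂, p.getVert (i₂+1)) ∧ ∃ a b, e = s(a, b) ∧ G.Adj a b ∧
            (a ≠ p.getVert i₂ ∧ ¬ (delVerts T {p.getVert i₂}).Reachable s a ∧
              ¬ (delVerts T {p.getVert i₂}).Reachable (p.getVert (i₂+1)) a) ∧
            (delVerts T {p.getVert i₂}).Reachable (p.getVert (i₂+1)) b))) :=
  stmt18_general G s t p hp T hT hPT i hi1 hil x y
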